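/- Let M be a ring with an R-matrix R in an additive symmetric tensor category. Then the new multiplication a∘b = m(R(a⊗b)), where m is the original multiplication, is associative with the same identity element 1. -/
import Mathlib


open TensorProduct

section Maps

variable (R M : Type) [CommRing R] [AddCommGroup M] [Module R M]

/-- A map `M ⊗ M → M ⊗ M` acting on factors 1,2 of `M ⊗ M ⊗ M`. -/
noncomputable def map12 (f : M ⊗[R] M →ₗ[R] M ⊗[R] M) :
    M ⊗[R] (M ⊗[R] M) →ₗ[R] M ⊗[R] (M ⊗[R] M) :=
  (TensorProduct.assoc R M M M).toLinearMap ∘ₗ f.rTensor M ∘ₗ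
    (TensorProduct.assoc R M M M).symm.toLinearMap

/-- A map `M ⊗ M → M ⊗ M` acting on factors 2,3 of `M ⊗ M ⊗ M`. -/
noncomputable def map23 (f : M ⊗[R] M →ₗ[R] M ⊗[R] M) :
    M ⊗[R] (M ⊗[R] M) →ₗ[R] M ⊗[R] (M ⊗[R] M) :=
  f.lTensor M

/-- The map exchanging factors 2,3 of `M ⊗ M ⊗ M`. -/
noncomputable def swap23 : M ⊗[R] (M ⊗[R] M) →ₗ[R] M ⊗[R] (M ⊗[R] M) :=
  (TensorProduct.comm R M M).toLinearMap.lTensor M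

/-- A map `M ⊗ M → M ⊗ M` acting on factors 1,3 of `M ⊗ M ⊗ M`. -/
noncomputable def map13 (f : M ⊗[R] M →ₗ[R] M ⊗[R] M) :
    M ⊗[R] (M ⊗[R] M) →ₗ[R] M ⊗[R] (M ⊗[R] M) :=
  swap23 R M ∘ₗ map12 R M f ∘ₗ swap23 R M

/-- A multiplication `M ⊗ M → M` applied to factors 1,2 of `M ⊗ M ⊗ M`. -/
noncomputable def mul12 (m : M ⊗[R] M →ₗ[R] M) :
    M ⊗[R] (M ⊗[R] M) →ₗ[R] M ⊗[R] M :=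
  m.rTensor M ∘ₗ (TensorProduct.assoc R M M M).symm.toLinearMap

/-- A multiplication `M ⊗ M → M` applied to factors 2,3 of `M ⊗ M ⊗ M`. -/
noncomputable def mul23 (m : M ⊗[R] M →ₗ[R] M) :
    M ⊗[R] (M ⊗[R] M) →ₗ[R] M ⊗[R] M :=
  m.lTensor M

end Maps

/-- If `M` is a ring (in the symmetric tensor category of `R`-modules) with an
R-matrix `ρ`, then the new multiplication `a ∘ b = m(ρ(a⊗b))` is associative
with the same identity element `1`. -/
theorem R_matrix_twisted_mul_associative (R M : Type) [CommRing R] [Ring M]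
    [Algebra R M] (ρ : M ⊗[R] M →ₗ[R] M ⊗[R] M)
    (h1 : ∀ a : M, ρ ((1 : M) ⊗ₜ[R] a) = (1 : M) ⊗ₜ[R] a)
    (h1' : ∀ a : M, ρ (a ⊗ₜ[R] (1 : M)) = a ⊗ₜ[R] (1 : M))
    (hc1 : mul23 R M (LinearMap.mul' R M) ∘ₗ map12 R M ρ ∘ₗ map13 R M ρ
      = ρ ∘ₗ mul23 R M (LinearMap.mul' R M))
    (hc2 : mul12 R M (LinearMap.mul' R M) ∘ₗ map23 R M ρ ∘ₗ map13 R M ρ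
      = ρ ∘ₗ mul12 R M (LinearMap.mul' R M))
    (hYB : map12 R M ρ ∘ₗ map13 R M ρ ∘ₗ map23 R M ρ
      = map23 R M ρ ∘ₗ map13 R M ρ ∘ₗ map12 R M ρ) :
    (∀ a b c : M,
      LinearMap.mul' R M (ρ ((LinearMap.mul' R M (ρ (a ⊗ₜ[R] b))) ⊗ₜ[R] c))
        = LinearMap.mul' R M (ρ (a ⊗ₜ[R] (LinearMap.mul' R M (ρ (b ⊗ₜ[R] c)))))) ∧
    (∀ a : M, LinearMap.mul' R M (ρ ((1 : M) ⊗ₜ[R] a)) = a) ∧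
    (∀ a : M, LinearMap.mul' R M (ρ (a ⊗ₜ[R] (1 : M))) = a) := by

  set m := LinearMap.mul' R M with hm_def
  have hm : m ∘ₗ mul12 R M m = m ∘ₗ mul23 R M m := by
    ext a b c
    simp [mul12, mul23, mul_assoc, hm_def]
  have key : m ∘ₗ (ρ ∘ₗ mul12 R M m) ∘ₗ map12 R M ρ
      = m ∘ₗ (ρ ∘ₗ mul23 R M m) ∘ₗ map23 R M ρ := by
    rw [← hc2, ← hc1]
    calc m ∘ₗ (mul12 R M m ∘ₗ map23 R M ρ ∘ₗ map13 R M ρ) ∘ₗ map12 R M ρ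
        = (m ∘ₗ mul12 R M m) ∘ₗ (map23 R M ρ ∘ₗ map13 R M ρ ∘ₗ map12 R M ρ) := by
          simp only [LinearMap.comp_assoc]
      _ = (m ∘ₗ mul23 R M m) ∘ₗ (map12 R M ρ ∘ₗ map13 R M ρ ∘ₗ map23 R M ρ) := by
          rw [hm, hYB]
      _ = m ∘ₗ (mul23 R M m ∘ₗ map12 R M ρ ∘ₗ map13 R M ρ) ∘ₗ map23 R M ρ := by
          simp only [LinearMap.comp_assoc]
  refine ⟨fun a b c => ?_, fun a => by simp [h1, hm_def, LinearMap.mul'_apply],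
    fun a => by simp [h1', hm_def, LinearMap.mul'_apply]⟩
  have e1 : (mul12 R M m ∘ₗ map12 R M ρ) (a ⊗ₜ[R] (b ⊗ₜ[R] c))
      = (m (ρ (a ⊗ₜ[R] b))) ⊗ₜ[R] c := by
    simp [mul12, map12, LinearEquiv.symm_apply_apply, ← LinearMap.rTensor_comp_apply]
  have e2 : (mul23 R M m ∘ₗ map23 R M ρ) (a ⊗ₜ[R] (b ⊗ₜ[R] c))
      = a ⊗ₜ[R] (m (ρ (b ⊗ₜ[R] c))) := by
    simp [mul23, map23, ← LinearMap.lTensor_comp_apply]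
  have := LinearMap.congr_fun key (a ⊗ₜ[R] (b ⊗ₜ[R] c))
  simp only [LinearMap.comp_apply] at this e1 e2
  rw [e1, e2] at this
  exact this
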